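/- Let S be an inverse semigroup, ρ a left congruence with trace τ = ρ restricted to the idempotents E(S). Then the kernel of ρ is contained in the left normaliser of τ: for all a ∈ S, if a ρ g for some idempotent g, then for all idempotents e, f with e τ f one has a⁻¹ea τ a⁻¹fa. -/

import Mathlib

class InverseSemigroup (S : Type*) extends Semigroup S where
  inv : S → S
  mul_inv_mul : ∀ a : S, a * inv a * a = a
  inv_mul_inv : ∀ a : S, inv a * a * inv a = inv a
  inv_unique : ∀ a b : S, a * b * a = a → b * a * b = b → b = inv a

open InverseSemigroup

/-- `e` is an idempotent. -/
def IsIdem {S : Type*} [Mul S] (e : S) : Prop := e * e = e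

/-- `r` is a left congruence: an equivalence relation compatible with left multiplication. -/
def IsLeftCongruence {S : Type*} [Semigroup S] (r : S → S → Prop) : Prop :=
  Equivalence r ∧ ∀ a b c : S, r a b → r (c * a) (c * b)

/-- The inverse kernel of a relation: elements related to `a * a⁻¹`. -/
def InK {S : Type*} [InverseSemigroup S] (r : S → S → Prop) : Set S :=
  {a | r a (a * inv a)}

/-- The kernel: elements related to some idempotent. -/
def lker {S : Type*} [InverseSemigroup S] (r : S → S → Prop) : Set S :=
  {a | ∃ e, IsIdem e ∧ r a e}

/-- `τ` is a congruence on the semilattice of idempotents `E(S)`. -/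
def IsECong {S : Type*} [InverseSemigroup S] (τ : S → S → Prop) : Prop :=
  (∀ e f, τ e f → IsIdem e ∧ IsIdem f) ∧
  (∀ e, IsIdem e → τ e e) ∧
  (∀ e f, τ e f → τ f e) ∧
  (∀ e f g, τ e f → τ f g → τ e g) ∧
  (∀ e f g, IsIdem g → τ e f → τ (g * e) (g * f))

/-- The normaliser of a congruence on the idempotents. -/
def normaliser {S : Type*} [InverseSemigroup S] (τ : S → S → Prop) : Set S :=
  {a | ∀ e f, τ e f → τ (a * e * inv a) (a * f * inv a) ∧ τ (inv a * e * a) (inv a * f * a)}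

/-- `T` is a full inverse subsemigroup of `S`. -/
def IsFullInverseSub {S : Type*} [InverseSemigroup S] (T : Set S) : Prop :=
  (∀ e : S, IsIdem e → e ∈ T) ∧ (∀ a b, a ∈ T → b ∈ T → a * b ∈ T) ∧
  (∀ a, a ∈ T → inv a ∈ T)

namespace InverseSemigroup

variable {S : Type*} [InverseSemigroup S]

theorem inv_eq_self_of_isIdem {e : S} (he : IsIdem e) : inv e = e :=
  (inv_unique e e (by rw [he, he]) (by rw [he, he])).symm

theorem inv_inv (a : S) : inv (inv a) = a :=
  (inv_unique (inv a) a (inv_mul_inv a) (mul_inv_mul a)).symm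

end InverseSemigroup

namespace IsIdem

theorem mul_self_mul {M : Type*} [Semigroup M] {e : M} (he : IsIdem e) (x : M) :
    e * (e * x) = e * x := by
  rw [← mul_assoc, he]

variable {S : Type*} [InverseSemigroup S]

/-- `x := (e f)⁻¹` satisfies `x = f x e`, since `f x e` is also an inverse of `e f`; hence `x` is
idempotent, and so is `e f = x⁻¹ = x`. -/
theorem mul {e f : S} (he : IsIdem e) (hf : IsIdem f) : IsIdem (e * f) := by
  set x := inv (e * f)
  have hx : f * x * e = x := by
    refine inv_unique (e * f) (f * x * e) ?_ ?_
    · simpa only [mul_assoc, he.mul_self_mul, hf.mul_self_mul] using mul_inv_mul (e * f)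
    · simpa only [mul_assoc, he.mul_self_mul, hf.mul_self_mul] using
        congrArg (fun y => f * y * e) (inv_mul_inv (e * f))
  have hxefx : x * (e * f) * x = x := inv_mul_inv (e * f)
  have hx_idem : IsIdem x :=
    calc x * x = (f * x * e) * (f * x * e) := by rw [hx]
      _ = f * (x * (e * f) * x) * e := by simp only [mul_assoc]
      _ = x := by rw [hxefx, hx]
  rwa [← InverseSemigroup.inv_inv (e * f), inv_eq_self_of_isIdem hx_idem]

theorem mul_comm {e f : S} (he : IsIdem e) (hf : IsIdem f) : e * f = f * e := by
  have hfe : f * e = inv (e * f) := by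
    refine inv_unique (e * f) (f * e) ?_ ?_
    · simpa only [IsIdem, mul_assoc, he.mul_self_mul, hf.mul_self_mul] using he.mul hf
    · simpa only [IsIdem, mul_assoc, he.mul_self_mul, hf.mul_self_mul] using hf.mul he
  rw [hfe, inv_eq_self_of_isIdem (he.mul hf)]

end IsIdem

/-- Idempotents commute, so `c e a ρ c e g = c g e`. -/
theorem IsLeftCongruence.mul_idem_mul_rel {S : Type*} [InverseSemigroup S] {r : S → S → Prop}
    (hr : IsLeftCongruence r) {a g e : S} (hg : IsIdem g) (hag : r a g) (he : IsIdem e)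
    (c : S) : r (c * e * a) (c * g * e) := by
  rw [mul_assoc c g, hg.mul_comm he, ← mul_assoc]
  exact hr.2 a g (c * e) hag

theorem stmt3 {S : Type*} [InverseSemigroup S] (r : S → S → Prop)
    (hr : IsLeftCongruence r) :
    ∀ a g : S, IsIdem g → r a g →
      ∀ e f : S, IsIdem e → IsIdem f → r e f →
        r (inv a * e * a) (inv a * f * a) := by
  intro a g hg hag e f he hf hef
  have hge_gf : r (inv a * g * e) (inv a * g * f) := hr.2 e f (inv a * g) hef
  exact hr.1.trans (hr.mul_idem_mul_rel hg hag he (inv a))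
    (hr.1.trans hge_gf (hr.1.symm (hr.mul_idem_mul_rel hg hag hf (inv a))))
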